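/- Let P be a ground normal logic program and U⁺ a set of atoms intersecting every positive cycle of the dependence graph of P (a positive feedback vertex set). Then the number of stable models of P is at most 2^{|U⁺|}. -/

import Mathlib

/-!
A stable model is a fixed point of the Boolean network `enc P`, whose influence graph is a
subgraph of the dependence graph. If two fixed points `x ≠ y` agree on `U`, then every atom where
they differ has an in-neighbour where they also differ, joined by an arc of the influence graph
that is positive exactly when `x` takes the same value at both ends. Following such in-neighbours
backwards must close a cycle avoiding `U`, and the signs along it multiply to `+1`: a positive
cycle outside `U`. Hence a stable model is determined by its restriction to `U`.
-/

/-- A rule of a ground normal logic program. -/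
structure Rule (V : Type*) where
  head : V
  pbody : Finset V
  nbody : Finset V
deriving DecidableEq

variable {V : Type*} [DecidableEq V] [Fintype V]

/-- The body formula of a rule holds in state `x`. -/
def bodySat (r : Rule V) (x : V → Bool) : Prop :=
  (∀ p ∈ r.pbody, x p = true) ∧ (∀ p ∈ r.nbody, x p = false)

instance (r : Rule V) (x : V → Bool) : Decidable (bodySat r x) := by
  unfold bodySat; infer_instance

/-- The Boolean network encoding of a logic program. -/
def enc (P : Finset (Rule V)) (v : V) (x : V → Bool) : Bool :=
  decide (∃ r ∈ P, r.head = v ∧ bodySat r x)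

/-- Positive arc of the dependence graph. -/
def posDG (P : Finset (Rule V)) (u v : V) : Prop :=
  ∃ r ∈ P, r.head = v ∧ u ∈ r.pbody

/-- Negative arc of the dependence graph. -/
def negDG (P : Finset (Rule V)) (u v : V) : Prop :=
  ∃ r ∈ P, r.head = v ∧ u ∈ r.nbody

/-- Positive arc of the influence graph of a Boolean network. -/
def posIG (f : V → (V → Bool) → Bool) (u v : V) : Prop :=
  ∃ x : V → Bool, f v (Function.update x u false) = false ∧ f v (Function.update x u true) = true

/-- Negative arc of the influence graph of a Boolean network. -/
def negIG (f : V → (V → Bool) → Bool) (u v : V) : Prop :=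
  ∃ x : V → Bool, f v (Function.update x u false) = true ∧ f v (Function.update x u true) = false

/-- `y` is a Herbrand model of the reduct of `P` with respect to `x`. -/
def modelsReduct (P : Finset (Rule V)) (x y : V → Bool) : Prop :=
  ∀ r ∈ P, (∀ p ∈ r.nbody, x p = false) → (∀ p ∈ r.pbody, y p = true) → y r.head = true

/-- `x` is a stable model of `P`: it is the least Herbrand model of the reduct `P^x`. -/
def isStable (P : Finset (Rule V)) (x : V → Bool) : Prop :=
  modelsReduct P x x ∧ ∀ y : V → Bool, modelsReduct P x y → ∀ v, x v = true → y v = true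

/-- Signed directed walks: `SWalk pos neg u v s n` means there is a directed walk of
length `n` from `u` to `v` whose parity of negative arcs is `s` (`true` = odd). -/
inductive SWalk {V : Type*} (pos neg : V → V → Prop) : V → V → Bool → ℕ → Prop where
  | nil (u : V) : SWalk pos neg u u false 0
  | consPos {u v w : V} {s : Bool} {n : ℕ} :
      pos u v → SWalk pos neg v w s n → SWalk pos neg u w s (n + 1)
  | consNeg {u v w : V} {s : Bool} {n : ℕ} :
      neg u v → SWalk pos neg v w s n → SWalk pos neg u w (!s) (n + 1)

section SignedWalk

variable {V : Type*}

theorem SWalk.mono {pos neg pos' neg' : V → V → Prop} (hpos : ∀ a b, pos a b → pos' a b)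
    (hneg : ∀ a b, neg a b → neg' a b) {u v : V} {s : Bool} {n : ℕ}
    (w : SWalk pos neg u v s n) : SWalk pos' neg' u v s n := by
  induction w with
  | nil u => exact .nil u
  | consPos h _ ih => exact .consPos (hpos _ _ h) ih
  | consNeg h _ ih => exact .consNeg (hneg _ _ h) ih

theorem exists_positive_closed_walk [Finite V] {pos neg : V → V → Prop} (x : V → Bool)
    {D : Set V} (hD : ∀ v ∈ D, ∃ u ∈ D, pos u v ∧ x u = x v ∨ neg u v ∧ x u ≠ x v)
    {v₀ : V} (hv₀ : v₀ ∈ D) : ∃ u n, n ≠ 0 ∧ SWalk pos neg u u false n := by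
  choose! pred hpredD hpred using hD
  have hmaps : Set.MapsTo pred D D := hpredD
  -- along the backward walk the parity of negative arcs is the change of label
  have walk : ∀ n, ∀ v ∈ D, SWalk pos neg (pred^[n] v) v (x (pred^[n] v) ^^ x v) n := by
    intro n
    induction n with
    | zero => intro v _; simpa using SWalk.nil v
    | succ n ih =>
      intro v hv
      rw [Function.iterate_succ_apply']
      rcases hpred _ (hmaps.iterate n hv) with ⟨hp, hx⟩ | ⟨hn, hx⟩
      · rw [hx]
        exact .consPos hp (ih v hv)
      · rw [Bool.eq_not_of_ne hx, Bool.not_xor]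
        exact .consNeg hn (ih v hv)
  obtain ⟨i, j, hij, hpij⟩ := Finite.exists_ne_map_eq_of_infinite (fun n => pred^[n] v₀)
  wlog hlt : i < j generalizing i j
  · exact this j i hij.symm hpij.symm (by omega)
  have hcycle : pred^[j - i] (pred^[i] v₀) = pred^[i] v₀ := by
    rw [← Function.iterate_add_apply, Nat.sub_add_cancel hlt.le]
    exact hpij.symm
  refine ⟨pred^[i] v₀, j - i, by omega, ?_⟩
  simpa [hcycle] using walk (j - i) _ (hmaps.iterate i hv₀)

end SignedWalk

section BooleanNetwork

variable {V : Type*} [DecidableEq V] [Fintype V]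

theorem exists_update_eq_of_apply_ne (g : (V → Bool) → Bool) {x y : V → Bool}
    (hxy : g x ≠ g y) : ∃ u z, g (Function.update z u (x u)) = g x ∧
      g (Function.update z u (y u)) = g y := by
  -- switch the coordinates from `x` to `y` one at a time
  suffices h : ∀ S : Finset V, g (S.piecewise y x) ≠ g x →
      ∃ u z, g (Function.update z u (x u)) = g x ∧ g (Function.update z u (y u)) ≠ g x by
    obtain ⟨u, z, hx, hy⟩ := h Finset.univ (by simpa using hxy.symm)
    exact ⟨u, z, hx, (Bool.eq_not_of_ne hy).trans (Bool.eq_not_of_ne hxy.symm).symm⟩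
  intro S
  induction S using Finset.induction_on with
  | empty => simp
  | insert a S haS ih =>
    intro hne
    by_cases hS : g (S.piecewise y x) = g x
    · refine ⟨a, S.piecewise y x, ?_, ?_⟩
      · rwa [← Finset.piecewise_eq_of_notMem S y x haS, Function.update_eq_self]
      · rwa [← Finset.piecewise_insert]
    · exact ih hS

variable {f : V → (V → Bool) → Bool}

theorem exists_signed_influence_of_ne {x y : V → Bool} (hx : ∀ v, f v x = x v)
    (hy : ∀ v, f v y = y v) {v : V} (hv : x v ≠ y v) :
    ∃ u, x u ≠ y u ∧ (posIG f u v ∧ x u = x v ∨ negIG f u v ∧ x u ≠ x v) := by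
  obtain ⟨u, z, hzx, hzy⟩ := exists_update_eq_of_apply_ne (f v) (x := x) (y := y)
    (by rwa [hx, hy])
  rw [hx] at hzx
  rw [hy] at hzy
  have hu : x u ≠ y u := fun h => hv (by rw [← hzx, ← hzy, h])
  refine ⟨u, hu, ?_⟩
  rw [Bool.eq_not_of_ne hu.symm, Bool.eq_not_of_ne hv.symm] at hzy
  cases hxu : x u <;> cases hxv : x v <;> simp only [hxu, hxv] at hzx hzy
  · exact .inl ⟨⟨z, hzx, hzy⟩, rfl⟩
  · exact .inr ⟨⟨z, hzx, hzy⟩, by decide⟩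
  · exact .inr ⟨⟨z, hzy, hzx⟩, by decide⟩
  · exact .inl ⟨⟨z, hzy, hzx⟩, rfl⟩

theorem eq_of_fixed_of_eqOn {U : Finset V}
    (hU : ∀ (u : V) (n : ℕ), n ≠ 0 →
      ¬ SWalk (fun a b => posIG f a b ∧ a ∉ U ∧ b ∉ U)
              (fun a b => negIG f a b ∧ a ∉ U ∧ b ∉ U) u u false n)
    {x y : V → Bool} (hx : ∀ v, f v x = x v) (hy : ∀ v, f v y = y v)
    (hxy : ∀ u ∈ U, x u = y u) : x = y := by
  by_contra hne
  obtain ⟨v₀, hv₀⟩ := Function.ne_iff.mp hne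
  have hD : ∀ v ∈ {v | x v ≠ y v}, ∃ u ∈ {v | x v ≠ y v},
      ((posIG f u v ∧ u ∉ U ∧ v ∉ U) ∧ x u = x v) ∨
        ((negIG f u v ∧ u ∉ U ∧ v ∉ U) ∧ x u ≠ x v) := by
    intro v hv
    have hvU : v ∉ U := fun h => hv (hxy v h)
    obtain ⟨u, hu, hsign⟩ := exists_signed_influence_of_ne hx hy hv
    have huU : u ∉ U := fun h => hu (hxy u h)
    exact ⟨u, hu, by tauto⟩
  obtain ⟨u, n, hn, hw⟩ := exists_positive_closed_walk x hD hv₀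
  exact hU u n hn hw

theorem ncard_fixedPoints_le {U : Finset V}
    (hU : ∀ (u : V) (n : ℕ), n ≠ 0 →
      ¬ SWalk (fun a b => posIG f a b ∧ a ∉ U ∧ b ∉ U)
              (fun a b => negIG f a b ∧ a ∉ U ∧ b ∉ U) u u false n) :
    {x : V → Bool | ∀ v, f v x = x v}.ncard ≤ 2 ^ U.card := by
  calc {x : V → Bool | ∀ v, f v x = x v}.ncard
      ≤ (Set.univ : Set (U → Bool)).ncard :=
        Set.ncard_le_ncard_of_injOn (fun x (u : U) => x u) (fun _ _ => Set.mem_univ _)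
          (fun x hx y hy hxy => eq_of_fixed_of_eqOn hU hx hy fun u hu => congrFun hxy ⟨u, hu⟩)
    _ = 2 ^ U.card := by simp [Set.ncard_univ]

end BooleanNetwork

section LogicProgram

variable {V : Type*} [DecidableEq V] {P : Finset (Rule V)} {x : V → Bool} {u v : V}

theorem bodySat_update_iff {r : Rule V} (hp : u ∉ r.pbody) (hn : u ∉ r.nbody) (b : Bool) :
    bodySat r (Function.update x u b) ↔ bodySat r x := by
  refine and_congr (forall₂_congr fun p hp' => ?_) (forall₂_congr fun p hn' => ?_)
  · rw [Function.update_of_ne (ne_of_mem_of_not_mem hp' hp)]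
  · rw [Function.update_of_ne (ne_of_mem_of_not_mem hn' hn)]

variable [Fintype V]

theorem enc_eq_true_iff : enc P v x = true ↔ ∃ r ∈ P, r.head = v ∧ bodySat r x := by
  simp [enc]

theorem posDG_of_posIG (h : posIG (enc P) u v) : posDG P u v := by
  obtain ⟨x, h0, h1⟩ := h
  obtain ⟨r, hr, rfl, hbody⟩ := enc_eq_true_iff.mp h1
  refine ⟨r, hr, rfl, ?_⟩
  by_contra hp
  have hn : u ∉ r.nbody := fun hn => by simpa using hbody.2 u hn
  have : enc P r.head (Function.update x u false) = true := enc_eq_true_iff.mpr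
    ⟨r, hr, rfl, (bodySat_update_iff hp hn false).mpr ((bodySat_update_iff hp hn true).mp hbody)⟩
  exact Bool.false_ne_true (h0.symm.trans this)

theorem negDG_of_negIG (h : negIG (enc P) u v) : negDG P u v := by
  obtain ⟨x, h0, h1⟩ := h
  obtain ⟨r, hr, rfl, hbody⟩ := enc_eq_true_iff.mp h0
  refine ⟨r, hr, rfl, ?_⟩
  by_contra hn
  have hp : u ∉ r.pbody := fun hp => by simpa using hbody.1 u hp
  have : enc P r.head (Function.update x u true) = true := enc_eq_true_iff.mpr
    ⟨r, hr, rfl, (bodySat_update_iff hp hn true).mpr ((bodySat_update_iff hp hn false).mp hbody)⟩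
  exact Bool.false_ne_true (h1.symm.trans this)

theorem modelsReduct.eq_true_of_enc (h : modelsReduct P x x) (hv : enc P v x = true) :
    x v = true := by
  obtain ⟨r, hr, rfl, hp, hn⟩ := enc_eq_true_iff.mp hv
  exact h r hr hn hp

theorem modelsReduct.update_false (h : modelsReduct P x x) (hv : enc P v x = false) :
    modelsReduct P x (Function.update x v false) := by
  intro r hr hn hp
  have hvp : v ∉ r.pbody := fun hvp => by simpa using hp v hvp
  have hxp : ∀ p ∈ r.pbody, x p = true := fun p hp' => by
    simpa [Function.update_of_ne (ne_of_mem_of_not_mem hp' hvp)] using hp p hp'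
  have hhead : r.head ≠ v := by
    rintro rfl
    exact Bool.false_ne_true (hv.symm.trans (enc_eq_true_iff.mpr ⟨r, hr, rfl, hxp, hn⟩))
  rw [Function.update_of_ne hhead]
  exact h r hr hn hxp

theorem isStable.enc_eq (h : isStable P x) (v : V) : enc P v x = x v := by
  cases hv : enc P v x
  · by_contra hxv
    simpa using h.2 _ (h.1.update_false hv) v (by simpa using Ne.symm hxv)
  · exact (h.1.eq_true_of_enc hv).symm

end LogicProgram

/-- if `U` is a positive feedback vertex set of the dependence graph of `P`
(i.e. every positive cycle meets `U`, equivalently the graph restricted to the vertices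
outside `U` has no positive cycle), then `P` has at most `2 ^ |U|` stable models. -/
theorem stmt9 {V : Type*} [DecidableEq V] [Fintype V] (P : Finset (Rule V)) (U : Finset V)
    (hpfvs : ∀ (u : V) (n : ℕ), n ≠ 0 →
      ¬ SWalk (fun a b => posDG P a b ∧ a ∉ U ∧ b ∉ U)
              (fun a b => negDG P a b ∧ a ∉ U ∧ b ∉ U) u u false n) :
    {x : V → Bool | isStable P x}.ncard ≤ 2 ^ U.card := by
  calc {x : V → Bool | isStable P x}.ncard
      ≤ {x : V → Bool | ∀ v, enc P v x = x v}.ncard :=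
        Set.ncard_le_ncard (fun x hx => hx.enc_eq) (Set.toFinite _)
    _ ≤ 2 ^ U.card := ncard_fixedPoints_le fun u n hn hw => hpfvs u n hn <|
        hw.mono (fun _ _ h => ⟨posDG_of_posIG h.1, h.2⟩) (fun _ _ h => ⟨negDG_of_negIG h.1, h.2⟩)
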